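/- arXiv:1404.5881 — 2 statements merged into one kernel-verified Lean document; each statement's English description precedes it below -/
import Mathlib

section
/- Let H be a finite-dimensional complex Hilbert space of dimension at least 3. There is no map v from self-adjoint operators on H to real numbers such that v(A) is always an eigenvalue of A and v(A+B) = v(A) + v(B) and v(AB) = v(A)v(B) whenever A and B commute. (Kochen–Specker via valuations.) -/
/-!
A non-contextual valuation `v` is `0` or `1` on every projection (`v P = v (P * P) = (v P)²`),
additive on mutually orthogonal projections, and `v 1 = 1`; hence among the lines of any
orthonormal basis exactly one has value `1`. Fix an orthonormal triple `e` of total value `1` and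
send `a ∈ ℝ³` to the line through `∑ aₛ eₛ`. The three lines of any orthogonal frame of `ℝ³` then
add up to the same projection as those of `e`, so "`v` of the line is `1`" is a Kochen–Specker
colouring of `ℝ³`: exactly one vector of each orthogonal frame is coloured.

No such colouring exists. By the Kochen–Specker gadget, two vectors at an angle with
`cos² = 1/10` are never both coloured. If `(1, 0, 0)` is uncoloured, the frames through it force
the coloured vectors of the `yz`-plane into a single quadrant, and then `(0, 0, 1)` is coloured;
by the symmetry `x ↔ y` this pins down the colours of the three axes, and the quadrants chosen in
the `yz`- and `xz`-planes always contain a gadget pair.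
-/

open Matrix
open scoped ComplexInnerProductSpace

theorem Matrix.sum_inv_dotProduct_smul_vecMulVec {K n : Type*} [Field K] [Fintype n]
    [DecidableEq n] (a : n → n → K) (ha : ∀ i, a i ⬝ᵥ a i ≠ 0)
    (horth : Pairwise fun i j => a i ⬝ᵥ a j = 0) :
    ∑ i, (a i ⬝ᵥ a i)⁻¹ • vecMulVec (a i) (a i) = 1 := by
  set D := diagonal fun i => (a i ⬝ᵥ a i)⁻¹
  have h : of a * ((of a)ᵀ * D) = 1 := by
    ext i j
    rw [← Matrix.mul_assoc, mul_diagonal, one_apply]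
    split_ifs with hij
    · subst hij
      exact mul_inv_cancel₀ (ha i)
    · rw [show (of a * (of a)ᵀ) i j = a i ⬝ᵥ a j from rfl, horth hij, zero_mul]
  rw [← mul_eq_one_comm.mp h]
  ext s t
  rw [mul_apply]
  simp only [Matrix.sum_apply, smul_apply, vecMulVec_apply, transpose_apply, of_apply, D,
    mul_diagonal, smul_eq_mul]
  exact Finset.sum_congr rfl fun i _ => by ring

theorem cross_ne_zero_of_dotProduct_eq_zero {R : Type*} [CommRing R] [LinearOrder R]
    [IsStrictOrderedRing R] {a b : Fin 3 → R} (ha : a ≠ 0) (hb : b ≠ 0)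
    (hab : a ⬝ᵥ b = 0) : a ⨯₃ b ≠ 0 := by
  intro h
  have := cross_dot_cross a b a b
  rw [h, zero_dotProduct, hab, zero_mul, sub_zero, eq_comm] at this
  exact mul_ne_zero (dotProduct_self_eq_zero.not.mpr ha) (dotProduct_self_eq_zero.not.mpr hb) this

section

variable {H : Type*} [NormedAddCommGroup H] [InnerProductSpace ℂ H]

theorem Submodule.starProjection_span_singleton_mul_eq_zero [CompleteSpace H] {x y : H}
    (h : ⟪x, y⟫ = 0) :
    (ℂ ∙ x).starProjection * (ℂ ∙ y).starProjection = 0 :=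
  Submodule.IsOrtho.starProjection_comp_starProjection (by simpa using h)

theorem OrthonormalBasis.sum_starProjection_span_singleton {ι : Type*} [Fintype ι]
    (b : OrthonormalBasis ι ℂ H) :
    ∑ i, (ℂ ∙ b i).starProjection = 1 := by
  ext w
  simp [Submodule.starProjection_unit_singleton ℂ (b.orthonormal.1 _), b.sum_repr']

end

namespace KochenSpecker

structure IsColouring (c : (Fin 3 → ℝ) → Prop) : Prop where
  not_and_of_orthogonal ⦃a b : Fin 3 → ℝ⦄ : a ≠ 0 → b ≠ 0 → a ⬝ᵥ b = 0 → ¬ (c a ∧ c b)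
  or_or_of_orthogonal ⦃a b d : Fin 3 → ℝ⦄ :
    a ≠ 0 ∧ b ≠ 0 ∧ d ≠ 0 ∧ a ⬝ᵥ b = 0 ∧ a ⬝ᵥ d = 0 ∧ b ⬝ᵥ d = 0 → c a ∨ c b ∨ c d

namespace IsColouring

variable {c : (Fin 3 → ℝ) → Prop}

theorem cross_of_not_of_not (hc : IsColouring c) {a b : Fin 3 → ℝ} (ha : a ≠ 0) (hb : b ≠ 0)
    (hab : a ⬝ᵥ b = 0) (hca : ¬ c a) (hcb : ¬ c b) : c (a ⨯₃ b) := by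
  have := hc.or_or_of_orthogonal ⟨ha, hb, cross_ne_zero_of_dotProduct_eq_zero ha hb hab, hab,
    dot_self_cross a b, dot_cross_self a b⟩
  tauto

/-- The Kochen–Specker gadget. If `c a` and `c b`, then `xᵢ ⊥ a` and `yᵢ = b ⨯₃ xᵢ ⊥ b` are
uncoloured, so `xᵢ ⨯₃ yᵢ` is coloured for `i = 1, 2`; but these two vectors are orthogonal.
Real `x₁, x₂` with this property exist as soon as `0 < cos² ∠(a, b) ≤ 1/9`. -/
theorem not_and_of_gadget (hc : IsColouring c) {a b : Fin 3 → ℝ} (x₁ x₂ : Fin 3 → ℝ)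
    (h : a ≠ 0 ∧ b ≠ 0 ∧ a ⬝ᵥ x₁ = 0 ∧ a ⬝ᵥ x₂ = 0 ∧ b ⨯₃ x₁ ≠ 0 ∧ b ⨯₃ x₂ ≠ 0 ∧
      x₁ ⨯₃ (b ⨯₃ x₁) ⬝ᵥ x₂ ⨯₃ (b ⨯₃ x₂) = 0) :
    ¬ (c a ∧ c b) := by
  obtain ⟨ha, hb, hax₁, hax₂, hy₁, hy₂, hz⟩ := h
  rintro ⟨hca, hcb⟩
  have forced : ∀ x, a ⬝ᵥ x = 0 → b ⨯₃ x ≠ 0 → c (x ⨯₃ (b ⨯₃ x)) ∧ x ⨯₃ (b ⨯₃ x) ≠ 0 := by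
    intro x hax hy
    have hx : x ≠ 0 := by
      rintro rfl
      simp at hy
    have hxy : x ⬝ᵥ b ⨯₃ x = 0 := dot_cross_self b x
    refine ⟨hc.cross_of_not_of_not hx hy hxy ?_ ?_, cross_ne_zero_of_dotProduct_eq_zero hx hy hxy⟩
    · exact fun hcx => hc.not_and_of_orthogonal ha hx hax ⟨hca, hcx⟩
    · exact fun hcy => hc.not_and_of_orthogonal hb hy (dot_self_cross b x) ⟨hcb, hcy⟩
  obtain ⟨hz₁, hz₁0⟩ := forced x₁ hax₁ hy₁
  obtain ⟨hz₂, hz₂0⟩ := forced x₂ hax₂ hy₂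
  exact hc.not_and_of_orthogonal hz₁0 hz₂0 hz ⟨hz₁, hz₂⟩

theorem comp_perm (hc : IsColouring c) (σ : Equiv.Perm (Fin 3)) :
    IsColouring fun a => c (a ∘ σ) := by
  have hne : ∀ a : Fin 3 → ℝ, a ≠ 0 → a ∘ σ ≠ 0 := fun a ha h =>
    ha (by ext i; simpa using congrFun h (σ.symm i))
  have hdot : ∀ a b : Fin 3 → ℝ, a ∘ σ ⬝ᵥ b ∘ σ = a ⬝ᵥ b := fun a b => by
    rw [← dotProduct_comp_equiv_symm, Function.comp_assoc, Equiv.self_comp_symm, Function.comp_id]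
  refine ⟨fun a b ha hb hab => hc.not_and_of_orthogonal (hne a ha) (hne b hb) (by rwa [hdot]),
    fun a b d ⟨ha, hb, hd, hab, had, hbd⟩ => hc.or_or_of_orthogonal ⟨hne a ha, hne b hb, hne d hd,
      by rwa [hdot], by rwa [hdot], by rwa [hdot]⟩⟩

end IsColouring

section

attribute [local simp] cross_apply vec3_dotProduct cons_val_two

variable {c : (Fin 3 → ℝ) → Prop}

theorem IsColouring.yz_quadrant_of_not_unit_x (hc : IsColouring c) (h : ¬ c ![1, 0, 0]) :
    (c ![0, 1, 1] ∧ c ![0, 1, 2] ∧ c ![0, 2, 1]) ∨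
      (c ![0, 1, -1] ∧ c ![0, 1, -2] ∧ c ![0, 2, -1]) := by
  have f₁ : c ![1, 0, 0] ∨ c ![0, 1, 1] ∨ c ![0, 1, -1] :=
    hc.or_or_of_orthogonal (by norm_num)
  have f₂ : c ![1, 0, 0] ∨ c ![0, 1, 2] ∨ c ![0, 2, -1] :=
    hc.or_or_of_orthogonal (by norm_num)
  have f₃ : c ![1, 0, 0] ∨ c ![0, 1, -2] ∨ c ![0, 2, 1] :=
    hc.or_or_of_orthogonal (by norm_num)
  have g₁ : ¬ (c ![0, 1, -1] ∧ c ![0, 1, 2]) :=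
    hc.not_and_of_gadget ![1, 1, 1] ![1, -1, -1] (by norm_num)
  have g₂ : ¬ (c ![0, 1, 1] ∧ c ![0, 2, -1]) :=
    hc.not_and_of_gadget ![1, 1, -1] ![1, -1, 1] (by norm_num)
  have g₃ : ¬ (c ![0, 1, 1] ∧ c ![0, 1, -2]) :=
    hc.not_and_of_gadget ![1, 1, -1] ![1, -1, 1] (by norm_num)
  have g₄ : ¬ (c ![0, 1, -1] ∧ c ![0, 2, 1]) :=
    hc.not_and_of_gadget ![1, 1, 1] ![1, -1, -1] (by norm_num)
  tauto

theorem IsColouring.unit_z_of_not_unit_x (hc : IsColouring c) (h : ¬ c ![1, 0, 0]) :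
    c ![0, 0, 1] := by
  have f : c ![0, 0, 1] ∨ c ![1, 1, 0] ∨ c ![1, -1, 0] :=
    hc.or_or_of_orthogonal (by norm_num)
  have g₁ : ¬ (c ![1, 1, 0] ∧ c ![0, 1, 2]) :=
    hc.not_and_of_gadget ![1, -1, -1] ![0, 0, 1] (by norm_num)
  have g₂ : ¬ (c ![1, -1, 0] ∧ c ![0, 1, 2]) :=
    hc.not_and_of_gadget ![1, 1, 1] ![0, 0, 1] (by norm_num)
  have g₃ : ¬ (c ![1, 1, 0] ∧ c ![0, 1, -2]) :=
    hc.not_and_of_gadget ![1, -1, 1] ![0, 0, 1] (by norm_num)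
  have g₄ : ¬ (c ![1, -1, 0] ∧ c ![0, 1, -2]) :=
    hc.not_and_of_gadget ![1, 1, -1] ![0, 0, 1] (by norm_num)
  have := hc.yz_quadrant_of_not_unit_x h
  tauto

theorem not_isColouring (c : (Fin 3 → ℝ) → Prop) : ¬ IsColouring c := by
  intro hc
  have swap : ∀ x y z : ℝ, (![x, y, z] ∘ Equiv.swap 0 1 : Fin 3 → ℝ) = ![y, x, z] := by
    intro x y z
    ext i
    fin_cases i <;> rfl
  have hσ := hc.comp_perm (Equiv.swap 0 1)
  have h₁₂ : ¬ (c ![1, 0, 0] ∧ c ![0, 1, 0]) :=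
    hc.not_and_of_orthogonal (by simp) (by simp) (by simp)
  have h₃ : c ![0, 0, 1] := by
    by_cases h₁ : c ![1, 0, 0]
    · simpa [swap] using hσ.unit_z_of_not_unit_x (by simpa [swap] using fun h₂ => h₁₂ ⟨h₁, h₂⟩)
    · exact hc.unit_z_of_not_unit_x h₁
  have h₁ : ¬ c ![1, 0, 0] := fun h₁ =>
    hc.not_and_of_orthogonal (by simp) (by simp) (by simp) ⟨h₁, h₃⟩
  have h₂ : ¬ c ![0, 1, 0] := fun h₂ =>
    hc.not_and_of_orthogonal (by simp) (by simp) (by simp) ⟨h₂, h₃⟩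
  have hyz := hc.yz_quadrant_of_not_unit_x h₁
  have hxz := hσ.yz_quadrant_of_not_unit_x (by simpa [swap] using h₂)
  simp only [swap] at hxz
  have g₁ : ¬ (c ![1, 0, 1] ∧ c ![0, 2, 1]) :=
    hc.not_and_of_gadget ![1, -1, -1] ![0, 1, 0] (by norm_num)
  have g₂ : ¬ (c ![0, 1, 1] ∧ c ![2, 0, -1]) :=
    hc.not_and_of_gadget ![1, 1, -1] ![1, 0, 0] (by norm_num)
  have g₃ : ¬ (c ![0, 1, -1] ∧ c ![2, 0, 1]) :=
    hc.not_and_of_gadget ![1, 1, 1] ![1, 0, 0] (by norm_num)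
  have g₄ : ¬ (c ![0, 1, -1] ∧ c ![2, 0, -1]) :=
    hc.not_and_of_gadget ![1, 0, 0] ![1, -1, -1] (by norm_num)
  tauto

end

section Hilbert

variable {H : Type*} [NormedAddCommGroup H] [InnerProductSpace ℂ H]

noncomputable def realCombination {n : Type*} [Fintype n] (e : n → H) (a : n → ℝ) : H :=
  ∑ s, (a s : ℂ) • e s

theorem inner_realCombination_left {n : Type*} [Fintype n] (e : n → H) (a : n → ℝ) (w : H) :
    ⟪realCombination e a, w⟫ = ∑ s, (a s : ℂ) * ⟪e s, w⟫ := by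
  simp [realCombination]

theorem inner_realCombination {n : Type*} [Fintype n] {e : n → H} (he : Orthonormal ℂ e)
    (a b : n → ℝ) : ⟪realCombination e a, realCombination e b⟫ = ((a ⬝ᵥ b : ℝ) : ℂ) := by
  classical
  simp [realCombination, orthonormal_iff_ite.mp he, dotProduct, mul_comm]

theorem norm_realCombination_sq {n : Type*} [Fintype n] {e : n → H} (he : Orthonormal ℂ e)
    (a : n → ℝ) : ‖realCombination e a‖ ^ 2 = a ⬝ᵥ a := by
  rw [@norm_sq_eq_re_inner ℂ, inner_realCombination he, RCLike.re_to_complex, Complex.ofReal_re]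

theorem sum_starProjection_realCombination {n : Type*} [Fintype n] [DecidableEq n] {e : n → H}
    (he : Orthonormal ℂ e) (a : n → n → ℝ) (ha : ∀ i, a i ≠ 0)
    (horth : Pairwise fun i j => a i ⬝ᵥ a j = 0) :
    ∑ i, (ℂ ∙ realCombination e (a i)).starProjection = ∑ s, (ℂ ∙ e s).starProjection := by
  have hres : ∀ s t, ∑ i, (a i ⬝ᵥ a i)⁻¹ * (a i s * a i t) = if s = t then 1 else 0 :=
    fun s t => by
      simpa [Matrix.sum_apply, vecMulVec_apply, one_apply] using congrFun (congrFun
        (sum_inv_dotProduct_smul_vecMulVec a (fun i => dotProduct_self_eq_zero.not.mpr (ha i))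
          horth) s) t
  ext w
  simp only [_root_.sum_apply, Submodule.starProjection_singleton,
    Submodule.starProjection_unit_singleton ℂ (he.1 _), norm_realCombination_sq he,
    inner_realCombination_left]
  calc ∑ i, ((∑ s, (a i s : ℂ) * ⟪e s, w⟫) / ((a i ⬝ᵥ a i : ℝ) : ℂ)) • realCombination e (a i)
      = ∑ i, ∑ s, ∑ t, (((a i ⬝ᵥ a i)⁻¹ * (a i s * a i t) : ℝ) : ℂ) • ⟪e s, w⟫ • e t := by
        refine Finset.sum_congr rfl fun i _ => ?_
        simp only [realCombination, Finset.smul_sum, smul_smul]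
        rw [Finset.sum_comm]
        refine Finset.sum_congr rfl fun t _ => ?_
        rw [← Finset.sum_smul, Finset.sum_div, Finset.sum_mul]
        congr 1
        refine Finset.sum_congr rfl fun s _ => ?_
        push_cast
        field_simp
    _ = ∑ s, ∑ t, ((∑ i, (a i ⬝ᵥ a i)⁻¹ * (a i s * a i t) : ℝ) : ℂ) • ⟪e s, w⟫ • e t := by
        simp only [Complex.ofReal_sum, Finset.sum_smul]
        rw [Finset.sum_comm]
        exact Finset.sum_congr rfl fun s _ => Finset.sum_comm
    _ = ∑ s, ⟪e s, w⟫ • e s := by simp [hres]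

variable [CompleteSpace H]

structure IsNoncontextualValuation (v : (H →L[ℂ] H) → ℝ) : Prop where
  hasEigenvalue : ∀ A : H →L[ℂ] H, IsSelfAdjoint A →
    Module.End.HasEigenvalue A.toLinearMap ((v A : ℝ) : ℂ)
  map_add_mul : ∀ A B : H →L[ℂ] H, IsSelfAdjoint A → IsSelfAdjoint B → A * B = B * A →
    v (A + B) = v A + v B ∧ v (A * B) = v A * v B

namespace IsNoncontextualValuation

variable {v : (H →L[ℂ] H) → ℝ} (hv : IsNoncontextualValuation v)
include hv

theorem map_one : v 1 = 1 := by
  obtain ⟨x, hx⟩ := (hv.hasEigenvalue 1 (.one _)).exists_hasEigenvector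
  have h : ((v 1 : ℂ) - 1) • x = 0 := by
    rw [sub_smul, one_smul, ← hx.apply_eq_smul]
    simp
  exact_mod_cast sub_eq_zero.mp ((smul_eq_zero.mp h).resolve_right hx.2)

theorem map_zero : v 0 = 0 := by
  have := (hv.map_add_mul 0 0 (.zero _) (.zero _) rfl).1
  rw [add_zero] at this
  linarith

theorem map_sum {ι : Type*} (s : Finset ι) (A : ι → H →L[ℂ] H)
    (hA : ∀ i ∈ s, IsSelfAdjoint (A i))
    (hcomm : (s : Set ι).Pairwise fun i j => Commute (A i) (A j)) :
    v (∑ i ∈ s, A i) = ∑ i ∈ s, v (A i) := by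
  classical
  induction s using Finset.induction_on with
  | empty => simpa using hv.map_zero
  | insert i s hi ih =>
    simp only [Finset.mem_insert, Finset.coe_insert, Set.pairwise_insert] at hA hcomm
    rw [Finset.sum_insert hi, Finset.sum_insert hi, ← ih (fun j hj => hA j (.inr hj)) hcomm.1]
    refine (hv.map_add_mul _ _ (hA i (.inl rfl))
      (isSelfAdjoint_sum s fun j hj => hA j (.inr hj)) ?_).1
    exact Commute.sum_right s _ _ fun j hj => (hcomm.2 j hj fun h => hi (h ▸ hj)).1

theorem eq_zero_or_eq_one {P : H →L[ℂ] H} (hP : IsStarProjection P) : v P = 0 ∨ v P = 1 := by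
  have h := (hv.map_add_mul P P hP.isSelfAdjoint hP.isSelfAdjoint rfl).2
  rw [hP.isIdempotentElem.eq] at h
  rcases mul_eq_zero.mp (show v P * (v P - 1) = 0 by linear_combination -h) with h | h
  · exact .inl h
  · exact .inr (by linarith)

theorem nonneg {P : H →L[ℂ] H} (hP : IsStarProjection P) : 0 ≤ v P :=
  (hv.eq_zero_or_eq_one hP).elim (fun h => h.ge) fun h => h ▸ zero_le_one

theorem mul_eq_zero_of_mul_eq_zero {P Q : H →L[ℂ] H} (hP : IsStarProjection P)
    (hQ : IsStarProjection Q) (hPQ : P * Q = 0) : v P * v Q = 0 := by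
  have hQP : Q * P = 0 := by
    simpa [hP.isSelfAdjoint.star_eq, hQ.isSelfAdjoint.star_eq] using congrArg star hPQ
  rw [← (hv.map_add_mul P Q hP.isSelfAdjoint hQ.isSelfAdjoint (hPQ.trans hQP.symm)).2, hPQ,
    hv.map_zero]

theorem map_sum_starProjection {ι : Type*} (s : Finset ι) {x : ι → H}
    (hx : Pairwise fun i j => ⟪x i, x j⟫ = 0) :
    v (∑ i ∈ s, (ℂ ∙ x i).starProjection) = ∑ i ∈ s, v (ℂ ∙ x i).starProjection :=
  hv.map_sum s _ (fun _ _ => isSelfAdjoint_starProjection _) fun _ _ _ _ hij =>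
    (Submodule.starProjection_span_singleton_mul_eq_zero (hx hij)).trans
      (Submodule.starProjection_span_singleton_mul_eq_zero (hx hij.symm)).symm

theorem exists_orthonormal_sum_eq_one [FiniteDimensional ℂ H] (hdim : 3 ≤ Module.finrank ℂ H) :
    ∃ e : Fin 3 → H, Orthonormal ℂ e ∧ ∑ s, v (ℂ ∙ e s).starProjection = 1 := by
  set b := stdOrthonormalBasis ℂ H
  have hb : ∀ i, 0 ≤ v (ℂ ∙ b i).starProjection := fun i =>
    hv.nonneg isStarProjection_starProjection
  have hsum : ∑ i, v (ℂ ∙ b i).starProjection = 1 := by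
    rw [← hv.map_sum_starProjection _ b.orthonormal.2, b.sum_starProjection_span_singleton,
      hv.map_one]
  obtain ⟨i₀, -, hi₀⟩ := Finset.exists_ne_zero_of_sum_ne_zero (hsum ▸ one_ne_zero)
  let ι : Fin 3 ↪ Fin (Module.finrank ℂ H) :=
    (Fin.castLEEmb hdim).trans (Equiv.swap (Fin.castLE hdim 0) i₀).toEmbedding
  refine ⟨b ∘ ι, b.orthonormal.comp ι ι.injective, le_antisymm ?_ ?_⟩
  · calc ∑ s, v (ℂ ∙ b (ι s)).starProjection
        = ∑ i ∈ Finset.univ.map ι, v (ℂ ∙ b i).starProjection := by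
          rw [Finset.sum_map]
      _ ≤ ∑ i, v (ℂ ∙ b i).starProjection :=
        Finset.sum_le_sum_of_subset_of_nonneg (Finset.subset_univ _) fun i _ _ => hb i
      _ = 1 := hsum
  · calc 1 = v (ℂ ∙ b (ι 0)).starProjection := by
          simpa [ι] using
            ((hv.eq_zero_or_eq_one isStarProjection_starProjection).resolve_left hi₀).symm
      _ ≤ ∑ s, v (ℂ ∙ b (ι s)).starProjection :=
        Finset.single_le_sum (fun s _ => hb (ι s)) (Finset.mem_univ 0)

theorem isColouring {e : Fin 3 → H} (he : Orthonormal ℂ e)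
    (h : ∑ s, v (ℂ ∙ e s).starProjection = 1) :
    IsColouring fun a => v (ℂ ∙ realCombination e a).starProjection = 1 := by
  have h01 : ∀ a, v (ℂ ∙ realCombination e a).starProjection = 0 ∨
      v (ℂ ∙ realCombination e a).starProjection = 1 :=
    fun a => hv.eq_zero_or_eq_one isStarProjection_starProjection
  constructor
  · rintro a b - - hab ⟨ha, hb⟩
    have := hv.mul_eq_zero_of_mul_eq_zero isStarProjection_starProjection
      isStarProjection_starProjection (Submodule.starProjection_span_singleton_mul_eq_zero
        (by rw [inner_realCombination he, hab, Complex.ofReal_zero]))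
    rw [ha, hb] at this
    norm_num at this
  · rintro a b d ⟨ha, hb, hd, hab, had, hbd⟩
    have horth : Pairwise fun i j => ![a, b, d] i ⬝ᵥ ![a, b, d] j = 0 := by
      intro i j hij
      fin_cases i <;> fin_cases j <;> simp_all [dotProduct_comm]
    have hsum := hv.map_sum_starProjection Finset.univ
      (x := fun i => realCombination e (![a, b, d] i))
      fun i j hij => by simp only [inner_realCombination he, horth hij, Complex.ofReal_zero]
    rw [sum_starProjection_realCombination he _ (by simp [Fin.forall_fin_succ, ha, hb, hd]) horth,
      hv.map_sum_starProjection Finset.univ he.2, h, Fin.sum_univ_three] at hsum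
    simp only [cons_val_zero, cons_val_one, cons_val_two, tail_cons, head_cons] at hsum
    by_contra hnone
    simp only [not_or] at hnone
    linarith [(h01 a).resolve_right hnone.1, (h01 b).resolve_right hnone.2.1,
      (h01 d).resolve_right hnone.2.2]

end IsNoncontextualValuation

end Hilbert

end KochenSpecker

/-- Kochen–Specker via valuations: on a finite-dimensional complex Hilbert
space of dimension at least 3 there is no assignment `v` of real numbers to
self-adjoint operators such that `v A` is always an eigenvalue of `A`, and `v`
is additive and multiplicative on commuting pairs of self-adjoint operators. -/
theorem stmt_12 {H : Type*} [NormedAddCommGroup H] [InnerProductSpace ℂ H]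
    [FiniteDimensional ℂ H] (hdim : 3 ≤ Module.finrank ℂ H) :
    ¬ ∃ v : (H →L[ℂ] H) → ℝ,
      (∀ A : H →L[ℂ] H, IsSelfAdjoint A →
        Module.End.HasEigenvalue (A.toLinearMap) ((v A : ℝ) : ℂ)) ∧
      (∀ A B : H →L[ℂ] H, IsSelfAdjoint A → IsSelfAdjoint B → A * B = B * A →
        v (A + B) = v A + v B ∧ v (A * B) = v A * v B) := by
  rintro ⟨v, heig, hops⟩
  have hv : KochenSpecker.IsNoncontextualValuation v := ⟨heig, hops⟩
  obtain ⟨e, he, h⟩ := hv.exists_orthonormal_sum_eq_one hdim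
  exact KochenSpecker.not_isColouring _ (hv.isColouring he h)
end

section
/- Let H be a Hilbert space with dim H ≥ 3 and L(H) the orthomodular lattice of its closed subspaces. There is no global valuation on L(H): no family of Boolean homomorphisms (v_i : W_i → 2), indexed by all Boolean subalgebras W_i of L(H), such that v_i and v_j agree on W_i ∩ W_j for all i,j. -/
variable (H : Type*) [NormedAddCommGroup H] [InnerProductSpace ℂ H]
  [CompleteSpace H]

/-- The closed subspaces of the Hilbert space `H`. -/
def ClosedSubspace := {K : Submodule ℂ H // IsClosed (K : Set H)}

variable {H}

namespace ClosedSubspace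

/-- Meet: intersection. -/
def meet (K K' : ClosedSubspace H) : ClosedSubspace H :=
  ⟨K.1 ⊓ K'.1, by rw [Submodule.coe_inf]; exact K.2.inter K'.2⟩

/-- Join: closure of the span of the union. -/
def join (K K' : ClosedSubspace H) : ClosedSubspace H :=
  ⟨(K.1 ⊔ K'.1).topologicalClosure, Submodule.isClosed_topologicalClosure _⟩

/-- Orthocomplement. -/
noncomputable def compl (K : ClosedSubspace H) : ClosedSubspace H :=
  ⟨K.1ᗮ, Submodule.isClosed_orthogonal _⟩

/-- The zero subspace. -/
def bot : ClosedSubspace H := ⟨⊥, by rw [Submodule.bot_coe]; exact isClosed_singleton⟩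

/-- The whole space. -/
def top : ClosedSubspace H := ⟨⊤, by rw [Submodule.top_coe]; exact isClosed_univ⟩

end ClosedSubspace

/-- A Boolean subalgebra of the lattice of closed subspaces. -/
def IsBoolSub (W : Set (ClosedSubspace H)) : Prop :=
  ClosedSubspace.bot ∈ W ∧ ClosedSubspace.top ∈ W ∧
  (∀ a ∈ W, a.compl ∈ W) ∧ (∀ a ∈ W, ∀ b ∈ W, a.meet b ∈ W) ∧
  (∀ a ∈ W, ∀ b ∈ W, a.join b ∈ W) ∧
  (∀ a ∈ W, ∀ b ∈ W, ∀ c ∈ W, a.meet (b.join c) = (a.meet b).join (a.meet c))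

/-- A Boolean homomorphism from `W` to the two-element Boolean algebra. -/
def IsHomOn (W : Set (ClosedSubspace H)) (v : ClosedSubspace H → Bool) : Prop :=
  v ClosedSubspace.bot = false ∧ v ClosedSubspace.top = true ∧
  (∀ a ∈ W, v a.compl = !(v a)) ∧
  (∀ a ∈ W, ∀ b ∈ W, v (a.meet b) = (v a && v b)) ∧
  (∀ a ∈ W, ∀ b ∈ W, v (a.join b) = (v a || v b))

/-!
A global valuation `v` gives every closed subspace a truth value, the same in every Boolean
subalgebra containing it; in the Boolean algebra generated by a finite orthogonal decomposition
of `H`, exactly one summand is true.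

Let `w` be an orthonormal family indexed by `κ × Fin 3`, so that its closed span is
`ℓ²(κ) ⊗ ℂ³`. An integer vector `r ∈ ℤ³` gives the closed subspace `ℓ²(κ) ⊗ r`, and an
orthogonal triad of such vectors, together with the complement of the span of `w`, decomposes
`H`. If that complement is false, `r ↦ v (ℓ²(κ) ⊗ r)` is a Kochen–Specker colouring of `ℤ³`:
exactly one vector of every orthogonal triad is true. No such colouring exists already on the 31
rays of Conway and Kochen, which a verified DPLL search checks. So the complement is true for
every such `w`. If `H` is infinite-dimensional, `w` can exhaust a Hilbert basis, whose complement
is `0`, which is false. If `3 ≤ dim H < ∞`, one line of an orthonormal basis is true, and three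
basis vectors through it form a `w` whose complement is false.
-/

open Matrix Submodule

namespace KochenSpecker

abbrev Literal (V : Type*) := V × Bool

abbrev Clause (V : Type*) := List (Literal V)

section Refutation

variable {V : Type*} [DecidableEq V]

def Agrees (c : V → Bool) (ρ : List (Literal V)) : Prop := ∀ l ∈ ρ, c l.1 = l.2

def Satisfies (c : V → Bool) (C : Clause V) : Prop := ∃ l ∈ C, c l.1 = l.2

def unfalsified (ρ : List (Literal V)) (C : Clause V) : Clause V :=
  C.filter fun l => (l.1, !l.2) ∉ ρ

/-- Unit propagation on one clause; `none` signals a conflict. -/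
def propagateClause (ρ : List (Literal V)) (C : Clause V) : Option (List (Literal V)) :=
  match unfalsified ρ C with
  | [] => none
  | [l] => some (if l ∈ ρ then ρ else l :: ρ)
  | _ => some ρ

def unitPropagate (F : List (Clause V)) (ρ : List (Literal V)) : Option (List (Literal V)) :=
  F.foldlM propagateClause ρ

def refute (F : List (Clause V)) : ℕ → List (Literal V) → Bool
  | 0, _ => false
  | k + 1, ρ =>
    match unitPropagate F ρ with
    | none => true
    | some ρ' =>
      if ρ'.length ≠ ρ.length then refute F k ρ'
      else match F.flatten.find? fun l => (l.1, true) ∉ ρ' ∧ (l.1, false) ∉ ρ' with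
        | none => false
        | some (x, _) => refute F k ((x, true) :: ρ') && refute F k ((x, false) :: ρ')

variable {c : V → Bool}

theorem propagateClause_sound {ρ : List (Literal V)} {C : Clause V} (hρ : Agrees c ρ)
    (hC : Satisfies c C) : ∃ ρ', propagateClause ρ C = some ρ' ∧ Agrees c ρ' := by
  obtain ⟨l, hlC, hl⟩ := hC
  have hl_open : l ∈ unfalsified ρ C := by
    refine List.mem_filter.2 ⟨hlC, decide_eq_true fun hneg => ?_⟩
    simpa [hl] using hρ _ hneg
  rw [propagateClause]
  rcases hopen : unfalsified ρ C with _ | ⟨l', _ | ⟨l'', t⟩⟩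
  · simp [hopen] at hl_open
  · obtain rfl : l = l' := by simpa [hopen] using hl_open
    refine ⟨_, rfl, ?_⟩
    split_ifs
    · exact hρ
    · exact List.forall_mem_cons.2 ⟨hl, hρ⟩
  · exact ⟨ρ, rfl, hρ⟩

theorem unitPropagate_sound {F : List (Clause V)} (hF : ∀ C ∈ F, Satisfies c C)
    {ρ : List (Literal V)} (hρ : Agrees c ρ) :
    ∃ ρ', unitPropagate F ρ = some ρ' ∧ Agrees c ρ' := by
  induction F generalizing ρ with
  | nil => exact ⟨ρ, rfl, hρ⟩
  | cons C F ih =>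
    obtain ⟨ρ₁, h₁, hρ₁⟩ := propagateClause_sound hρ (hF C List.mem_cons_self)
    obtain ⟨ρ₂, h₂, hρ₂⟩ := ih (fun C' hC' => hF C' (List.mem_cons_of_mem C hC')) hρ₁
    refine ⟨ρ₂, ?_, hρ₂⟩
    simp only [unitPropagate, List.foldlM_cons, h₁] at h₂ ⊢
    exact h₂

theorem refute_sound {F : List (Clause V)} (hF : ∀ C ∈ F, Satisfies c C) :
    ∀ {k : ℕ} {ρ : List (Literal V)}, refute F k ρ = true → Agrees c ρ → False
  | 0, _, h, _ => by simp [refute] at h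
  | k + 1, ρ, h, hρ => by
    obtain ⟨ρ', hprop, hρ'⟩ := unitPropagate_sound hF hρ
    simp only [refute, hprop] at h
    split_ifs at h
    · exact refute_sound hF h hρ'
    · split at h
      · simp at h
      · rename_i x _ _
        rw [Bool.and_eq_true] at h
        cases hx : c x
        · exact refute_sound hF h.2 (List.forall_mem_cons.2 ⟨hx, hρ'⟩)
        · exact refute_sound hF h.1 (List.forall_mem_cons.2 ⟨hx, hρ'⟩)

end Refutation

def IsOrthTriad (r : Fin 3 → Fin 3 → ℤ) : Prop :=
  (∀ m, r m ≠ 0) ∧ Pairwise fun m n => r m ⬝ᵥ r n = 0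

def IsKSColouring (c : (Fin 3 → ℤ) → Bool) : Prop :=
  ∀ r, IsOrthTriad r → ∃! m, c (r m) = true

theorem isOrthTriad_vec3 {r s t : Fin 3 → ℤ} (hr : r ≠ 0) (hs : s ≠ 0) (ht : t ≠ 0)
    (hrs : r ⬝ᵥ s = 0) (hrt : r ⬝ᵥ t = 0) (hst : s ⬝ᵥ t = 0) : IsOrthTriad ![r, s, t] := by
  refine ⟨fun m => by fin_cases m <;> assumption, fun m n hmn => ?_⟩
  fin_cases m <;> fin_cases n <;> simp_all [dotProduct_comm]

theorem isOrthTriad_single : IsOrthTriad fun m => Pi.single m 1 :=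
  ⟨fun m => by simp, fun m n hmn => by simp [hmn]⟩

namespace IsKSColouring

variable {c : (Fin 3 → ℤ) → Bool}

theorem exists_eq_true (hc : IsKSColouring c) {r s t : Fin 3 → ℤ} (hr : r ≠ 0) (hs : s ≠ 0)
    (ht : t ≠ 0) (hrs : r ⬝ᵥ s = 0) (hrt : r ⬝ᵥ t = 0) (hst : s ⬝ᵥ t = 0) :
    c r = true ∨ c s = true ∨ c t = true := by
  obtain ⟨m, hm, -⟩ := hc _ (isOrthTriad_vec3 hr hs ht hrs hrt hst)
  fin_cases m <;> simp_all

/-- An orthogonal pair extends to the triad `r, s, r ⨯₃ s`. -/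
theorem not_and (hc : IsKSColouring c) {r s : Fin 3 → ℤ} (hr : r ≠ 0) (hs : s ≠ 0)
    (hrs : r ⬝ᵥ s = 0) : ¬ (c r = true ∧ c s = true) := by
  rintro ⟨hcr, hcs⟩
  have hcross : r ⨯₃ s ≠ 0 := fun h0 => by
    have := cross_dot_cross r s r s
    rw [h0, zero_dotProduct, hrs, dotProduct_comm s r, hrs, mul_zero, sub_zero, eq_comm,
      mul_eq_zero, dotProduct_self_eq_zero, dotProduct_self_eq_zero] at this
    exact this.elim hr hs
  obtain ⟨m, -, huniq⟩ := hc _ (isOrthTriad_vec3 hr hs hcross hrs (dot_self_cross r s)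
    (dot_cross_self r s))
  exact absurd ((huniq 0 hcr).trans (huniq 1 hcs).symm) (by decide)

end IsKSColouring

def orthClauses {n : ℕ} (ray : Fin n → Fin 3 → ℤ) : List (Clause (Fin n)) :=
  (((List.finRange n).sublistsLen 2).filter (·.Pairwise fun i j => ray i ⬝ᵥ ray j = 0)).map
      (·.map (·, false)) ++
    (((List.finRange n).sublistsLen 3).filter (·.Pairwise fun i j => ray i ⬝ᵥ ray j = 0)).map
      (·.map (·, true))

theorem IsKSColouring.satisfies_orthClauses {c : (Fin 3 → ℤ) → Bool} (hc : IsKSColouring c)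
    {n : ℕ} {ray : Fin n → Fin 3 → ℤ} (hray : ∀ i, ray i ≠ 0) :
    ∀ C ∈ orthClauses ray, Satisfies (c ∘ ray) C := by
  intro C hC
  simp only [orthClauses, List.mem_append, List.mem_map, List.mem_filter, List.mem_sublistsLen,
    decide_eq_true_eq] at hC
  rcases hC with ⟨P, ⟨⟨-, hP⟩, horth⟩, rfl⟩ | ⟨T, ⟨⟨-, hT⟩, horth⟩, rfl⟩
  · obtain ⟨i, j, rfl⟩ := List.length_eq_two.1 hP
    have := hc.not_and (hray i) (hray j) (by simpa using horth)
    cases hci : c (ray i) <;> simp_all [Satisfies]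
  · obtain ⟨i, j, k, rfl⟩ := List.length_eq_three.1 hT
    have horth' : (ray i ⬝ᵥ ray j = 0 ∧ ray i ⬝ᵥ ray k = 0) ∧ ray j ⬝ᵥ ray k = 0 := by
      simpa [List.pairwise_cons] using horth
    have := hc.exists_eq_true (hray i) (hray j) (hray k) horth'.1.1 horth'.1.2 horth'.2
    simpa [Satisfies] using this

/-- The 31 rays of Conway and Kochen. -/
def conwayKochen : Fin 31 → Fin 3 → ℤ :=
  ![![0, 0, 1], ![0, 1, -2], ![0, 1, -1], ![0, 1, 0], ![0, 1, 1], ![0, 1, 2], ![0, 2, -1],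
    ![0, 2, 1], ![1, -1, -2], ![1, -1, -1], ![1, -1, 0], ![1, -1, 1], ![1, -1, 2], ![1, 0, -2],
    ![1, 0, -1], ![1, 0, 0], ![1, 0, 1], ![1, 0, 2], ![1, 1, -2], ![1, 1, -1], ![1, 1, 0],
    ![1, 1, 1], ![1, 1, 2], ![1, 2, -1], ![1, 2, 0], ![1, 2, 1], ![2, -1, -1], ![2, -1, 0],
    ![2, -1, 1], ![2, 0, -1], ![2, 0, 1]]

theorem refute_orthClauses_conwayKochen : refute (orthClauses conwayKochen) 50 [] = true := by
  decide +kernel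

theorem not_isKSColouring (c : (Fin 3 → ℤ) → Bool) : ¬ IsKSColouring c := fun hc =>
  refute_sound (hc.satisfies_orthClauses (by decide)) refute_orthClauses_conwayKochen
    (by simp [Agrees])

section OrthDecomp

variable {E : Type*} [NormedAddCommGroup E] [InnerProductSpace ℂ E] {ι : Type*}

structure IsOrthDecomp (a : ι → Submodule ℂ E) : Prop where
  isClosed : ∀ i, IsClosed (a i : Set E)
  isOrtho : Pairwise fun i j => a i ⟂ a j
  orthogonal_iSup : (⨆ i, a i)ᗮ = ⊥

variable {a : ι → Submodule ℂ E}

theorem IsOrthDecomp.isOrtho_finsetSup (ha : IsOrthDecomp a) {S T : Finset ι}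
    (hST : Disjoint S T) : S.sup a ⟂ T.sup a := by
  rw [isOrtho_iff_le]
  refine Finset.sup_le fun i hi => (isOrtho_comm.1 ?_).le
  rw [isOrtho_iff_le]
  exact Finset.sup_le fun j hj =>
    (ha.isOrtho fun (hij : i = j) => Finset.disjoint_left.1 hST hi (hij ▸ hj)).ge

/-- The element `⨁_{i ∈ S} a i` of the Boolean algebra generated by `a`. -/
noncomputable def orthSum (a : ι → Submodule ℂ E) (S : Finset ι) : ClosedSubspace E :=
  ⟨(S.sup a)ᗮᗮ, isClosed_orthogonal _⟩

theorem orthSum_empty (a : ι → Submodule ℂ E) : orthSum a ∅ = ClosedSubspace.bot :=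
  Subtype.ext <| by simp [orthSum, ClosedSubspace.bot]

def orthDecompAlgebra (a : ι → Submodule ℂ E) : Set (ClosedSubspace E) :=
  Set.range (orthSum a)

theorem IsOrthDecomp.orthSum_univ [Fintype ι] (ha : IsOrthDecomp a) :
    orthSum a Finset.univ = ClosedSubspace.top :=
  Subtype.ext <| by
    simp [orthSum, ClosedSubspace.top, Finset.sup_univ_eq_iSup, ha.orthogonal_iSup]

variable [CompleteSpace E]

/-- Orthomodularity of the lattice of closed subspaces. -/
theorem orthogonal_eq_orthogonal_orthogonal_of_isOrtho {A B : Submodule ℂ E} (hAB : A ⟂ B)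
    (h : (A ⊔ B)ᗮ = ⊥) : Aᗮ = Bᗮᗮ := by
  have hle : Bᗮᗮ ≤ Aᗮ := by
    simpa only [triorthogonal_eq_orthogonal] using orthogonal_le (orthogonal_le hAB.ge)
  have := sup_orthogonal_inf_of_hasOrthogonalProjection hle
  rw [triorthogonal_eq_orthogonal, inf_orthogonal, sup_comm B A, h, sup_bot_eq] at this
  exact this.symm

theorem IsOrthDecomp.orthSum_singleton (ha : IsOrthDecomp a) (i : ι) :
    orthSum a {i} = ⟨a i, ha.isClosed i⟩ :=
  Subtype.ext <| by
    simp [orthSum, orthogonal_orthogonal_eq_closure,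
      (ha.isClosed i).submodule_topologicalClosure_eq]

theorem orthSum_join [DecidableEq ι] (a : ι → Submodule ℂ E) (S T : Finset ι) :
    (orthSum a S).join (orthSum a T) = orthSum a (S ∪ T) := by
  refine Subtype.ext ?_
  change ((S.sup a)ᗮᗮ ⊔ (T.sup a)ᗮᗮ).topologicalClosure = ((S ∪ T).sup a)ᗮᗮ
  rw [← orthogonal_orthogonal_eq_closure, ← inf_orthogonal, triorthogonal_eq_orthogonal,
    triorthogonal_eq_orthogonal, inf_orthogonal, Finset.sup_union]

variable [Fintype ι] [DecidableEq ι]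

theorem IsOrthDecomp.orthSum_eq (ha : IsOrthDecomp a) (S : Finset ι) :
    (orthSum a S).1 = (Sᶜ.sup a)ᗮ := by
  refine (orthogonal_eq_orthogonal_orthogonal_of_isOrtho
    (ha.isOrtho_finsetSup disjoint_compl_left) ?_).symm
  rw [← Finset.sup_union, Finset.union_comm, Finset.union_compl, Finset.sup_univ_eq_iSup,
    ha.orthogonal_iSup]

theorem IsOrthDecomp.orthSum_compl (ha : IsOrthDecomp a) (S : Finset ι) :
    (orthSum a S).compl = orthSum a Sᶜ := by
  refine Subtype.ext ?_
  change (S.sup a)ᗮᗮᗮ = (orthSum a Sᶜ).1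
  rw [triorthogonal_eq_orthogonal, ha.orthSum_eq, compl_compl]

theorem IsOrthDecomp.orthSum_meet (ha : IsOrthDecomp a) (S T : Finset ι) :
    (orthSum a S).meet (orthSum a T) = orthSum a (S ∩ T) := by
  refine Subtype.ext ?_
  change (orthSum a S).1 ⊓ (orthSum a T).1 = (orthSum a (S ∩ T)).1
  rw [ha.orthSum_eq, ha.orthSum_eq, ha.orthSum_eq, inf_orthogonal, ← Finset.sup_union,
    Finset.compl_inter]

theorem IsOrthDecomp.isBoolSub (ha : IsOrthDecomp a) : IsBoolSub (orthDecompAlgebra a) := by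
  refine ⟨⟨∅, orthSum_empty a⟩, ⟨Finset.univ, ha.orthSum_univ⟩, ?_, ?_, ?_, ?_⟩
  · rintro _ ⟨S, rfl⟩
    exact ⟨Sᶜ, (ha.orthSum_compl S).symm⟩
  · rintro _ ⟨S, rfl⟩ _ ⟨T, rfl⟩
    exact ⟨S ∩ T, (ha.orthSum_meet S T).symm⟩
  · rintro _ ⟨S, rfl⟩ _ ⟨T, rfl⟩
    exact ⟨S ∪ T, (orthSum_join a S T).symm⟩
  · rintro _ ⟨S, rfl⟩ _ ⟨T, rfl⟩ _ ⟨U, rfl⟩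
    simp only [orthSum_join, ha.orthSum_meet, Finset.inter_union_distrib_left]

end OrthDecomp

section GlobalValuation

variable {E : Type*} [NormedAddCommGroup E] [InnerProductSpace ℂ E]

structure IsGlobalValuation
    (v : ∀ W : Set (ClosedSubspace E), IsBoolSub W → ClosedSubspace E → Bool) : Prop where
  isHomOn : ∀ (W : Set (ClosedSubspace E)) (hW : IsBoolSub W), IsHomOn W (v W hW)
  agree : ∀ (W₁ W₂ : Set (ClosedSubspace E)) (h₁ : IsBoolSub W₁) (h₂ : IsBoolSub W₂)
    (x : ClosedSubspace E), x ∈ W₁ → x ∈ W₂ → v W₁ h₁ x = v W₂ h₂ x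

noncomputable def pairDecomp (x : ClosedSubspace E) : Bool → Submodule ℂ E :=
  fun b => cond b x.1 x.1ᗮ

theorem isOrthDecomp_pairDecomp (x : ClosedSubspace E) : IsOrthDecomp (pairDecomp x) := by
  refine ⟨fun b => ?_, fun b b' hbb' => ?_, ?_⟩
  · cases b
    exacts [isClosed_orthogonal _, x.2]
  · cases b <;> cases b'
    exacts [absurd rfl hbb', isOrtho_orthogonal_left _, isOrtho_orthogonal_right _,
      absurd rfl hbb']
  · rw [iSup_bool_eq, ← inf_orthogonal]
    exact inf_orthogonal_eq_bot _

variable [CompleteSpace E]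

/-- The value of `x`, read off in the Boolean algebra `{0, x, xᗮ, 1}`. -/
noncomputable def globalValue
    (v : ∀ W : Set (ClosedSubspace E), IsBoolSub W → ClosedSubspace E → Bool)
    (x : ClosedSubspace E) : Bool :=
  v _ (isOrthDecomp_pairDecomp x).isBoolSub x

variable {v : ∀ W : Set (ClosedSubspace E), IsBoolSub W → ClosedSubspace E → Bool}

namespace IsGlobalValuation

theorem apply_eq_globalValue (hv : IsGlobalValuation v) {W : Set (ClosedSubspace E)}
    (hW : IsBoolSub W) {x : ClosedSubspace E} (hx : x ∈ W) : v W hW x = globalValue v x :=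
  hv.agree _ _ _ _ x hx ⟨{true}, (isOrthDecomp_pairDecomp x).orthSum_singleton true⟩

theorem globalValue_bot (hv : IsGlobalValuation v) : globalValue v ClosedSubspace.bot = false :=
  (hv.isHomOn _ _).1

theorem existsUnique_globalValue (hv : IsGlobalValuation v) {ι : Type*} [Fintype ι]
    [DecidableEq ι] {a : ι → Submodule ℂ E} (ha : IsOrthDecomp a) :
    ∃! i, globalValue v ⟨a i, ha.isClosed i⟩ = true := by
  obtain ⟨hbot, htop, -, hmeet, hjoin⟩ := hv.isHomOn _ ha.isBoolSub
  have hval (i : ι) : v _ ha.isBoolSub (orthSum a {i}) = globalValue v ⟨a i, ha.isClosed i⟩ := by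
    rw [← ha.orthSum_singleton]
    exact hv.apply_eq_globalValue _ ⟨_, rfl⟩
  have hexists (S : Finset ι) (hS : v _ ha.isBoolSub (orthSum a S) = true) :
      ∃ i ∈ S, globalValue v ⟨a i, ha.isClosed i⟩ = true := by
    induction S using Finset.induction_on with
    | empty => simp [orthSum_empty, hbot] at hS
    | insert i S _ ih =>
      rw [Finset.insert_eq, ← orthSum_join, hjoin _ ⟨_, rfl⟩ _ ⟨_, rfl⟩, Bool.or_eq_true] at hS
      rcases hS with hi | hS
      · exact ⟨i, Finset.mem_insert_self i S, hval i ▸ hi⟩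
      · obtain ⟨j, hj, hvj⟩ := ih hS
        exact ⟨j, Finset.mem_insert_of_mem hj, hvj⟩
  obtain ⟨i, -, hi⟩ := hexists Finset.univ (by rw [ha.orthSum_univ]; exact htop)
  refine ⟨i, hi, fun j hj => by_contra fun hji => ?_⟩
  have := hmeet _ ⟨{j}, rfl⟩ _ ⟨{i}, rfl⟩
  rw [ha.orthSum_meet, Finset.singleton_inter_of_notMem (by simpa using hji), orthSum_empty,
    hbot, hval, hval, hi, hj] at this
  exact Bool.false_ne_true this

end IsGlobalValuation

end GlobalValuation

section Frame

variable {E : Type*} [NormedAddCommGroup E] [InnerProductSpace ℂ E]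

def intComb (e : Fin 3 → E) (r : Fin 3 → ℤ) : E := ∑ k, (r k : ℂ) • e k

theorem intComb_mem {e : Fin 3 → E} {K : Submodule ℂ E} (he : ∀ k, e k ∈ K) (r : Fin 3 → ℤ) :
    intComb e r ∈ K :=
  sum_mem fun k _ => K.smul_mem _ (he k)

theorem inner_intComb {e : Fin 3 → E} (he : Orthonormal ℂ e) (r s : Fin 3 → ℤ) :
    inner ℂ (intComb e r) (intComb e s) = ((r ⬝ᵥ s : ℤ) : ℂ) := by
  simp [intComb, he.inner_sum, dotProduct]

theorem inner_intComb_eq_zero {e f : Fin 3 → E} (hef : ∀ k l, inner ℂ (e k) (f l) = 0)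
    (r s : Fin 3 → ℤ) : inner ℂ (intComb e r) (intComb f s) = 0 := by
  simp [intComb, hef]

theorem span_intComb_eq {e : Fin 3 → E} (he : Orthonormal ℂ e) {r : Fin 3 → Fin 3 → ℤ}
    (hr : IsOrthTriad r) : span ℂ (Set.range fun m => intComb e (r m)) = span ℂ (Set.range e) := by
  have hli : LinearIndependent ℂ fun m => intComb e (r m) := by
    refine linearIndependent_of_ne_zero_of_inner_eq_zero (fun m h0 => hr.1 m ?_) fun m n hmn => ?_
    · have := inner_intComb he (r m) (r m)
      rw [h0, inner_zero_left, eq_comm, Int.cast_eq_zero, dotProduct_self_eq_zero] at this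
      exact this
    · dsimp only
      rw [inner_intComb he, hr.2 hmn, Int.cast_zero]
  have : FiniteDimensional ℂ (span ℂ (Set.range e)) :=
    FiniteDimensional.span_of_finite ℂ (Set.finite_range e)
  refine eq_of_le_of_finrank_le (span_le.2 ?_) ?_
  · rintro _ ⟨m, rfl⟩
    exact intComb_mem (fun k => subset_span (Set.mem_range_self k)) (r m)
  · rw [finrank_span_eq_card hli, finrank_span_eq_card he.linearIndependent]

variable {κ : Type*} {w : κ × Fin 3 → E}

/-- The subspace `ℓ²(κ) ⊗ r` of the closed span `ℓ²(κ) ⊗ ℂ³` of the frame `w`. -/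
noncomputable def raySpace (w : κ × Fin 3 → E) (r : Fin 3 → ℤ) : Submodule ℂ E :=
  (span ℂ (Set.range fun i => intComb (fun k => w (i, k)) r)).topologicalClosure

theorem raySpace_isOrtho (hw : Orthonormal ℂ w) {r s : Fin 3 → ℤ} (hrs : r ⬝ᵥ s = 0) :
    raySpace w r ⟂ raySpace w s := by
  rw [isOrtho_iff_le, raySpace, raySpace, orthogonal_closure]
  refine topologicalClosure_minimal _ (isOrtho_iff_le.1 ?_) (isClosed_orthogonal _)
  rw [isOrtho_span]
  rintro _ ⟨i, rfl⟩ _ ⟨j, rfl⟩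
  rcases eq_or_ne i j with rfl | hij
  · have hwi : Orthonormal ℂ fun k => w (i, k) := hw.comp _ (Prod.mk_right_injective i)
    rw [inner_intComb hwi, hrs, Int.cast_zero]
  · exact inner_intComb_eq_zero (fun k l => hw.2 fun h => hij (Prod.ext_iff.1 h).1) r s

theorem raySpace_isOrtho_orthogonal_span (w : κ × Fin 3 → E) (r : Fin 3 → ℤ) :
    raySpace w r ⟂ (span ℂ (Set.range w))ᗮ := by
  rw [isOrtho_iff_le]
  refine topologicalClosure_minimal _ (span_le.2 ?_) (isClosed_orthogonal _)
  rintro _ ⟨i, rfl⟩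
  exact le_orthogonal_orthogonal _
    (intComb_mem (fun k => subset_span (Set.mem_range_self (i, k))) r)

theorem span_le_iSup_raySpace (hw : Orthonormal ℂ w) {r : Fin 3 → Fin 3 → ℤ}
    (hr : IsOrthTriad r) : span ℂ (Set.range w) ≤ ⨆ m, raySpace w (r m) := by
  rw [span_le]
  rintro _ ⟨⟨i, k⟩, rfl⟩
  have hwi : Orthonormal ℂ fun k => w (i, k) := hw.comp _ (Prod.mk_right_injective i)
  have hmem : w (i, k) ∈ span ℂ (Set.range fun m => intComb (fun k => w (i, k)) (r m)) := by
    rw [span_intComb_eq hwi hr]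
    exact subset_span ⟨k, rfl⟩
  refine span_le.2 ?_ hmem
  rintro _ ⟨m, rfl⟩
  exact mem_iSup_of_mem m (le_topologicalClosure _ (subset_span ⟨i, rfl⟩))

noncomputable def triadDecomp (w : κ × Fin 3 → E) (r : Fin 3 → Fin 3 → ℤ) :
    Option (Fin 3) → Submodule ℂ E :=
  fun o => o.elim (span ℂ (Set.range w))ᗮ fun m => raySpace w (r m)

theorem isOrthDecomp_triadDecomp (hw : Orthonormal ℂ w) {r : Fin 3 → Fin 3 → ℤ}
    (hr : IsOrthTriad r) : IsOrthDecomp (triadDecomp w r) := by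
  refine ⟨?_, ?_, ?_⟩
  · rintro (_ | m)
    exacts [isClosed_orthogonal _, isClosed_topologicalClosure _]
  · rintro (_ | m) (_ | n) hmn
    · exact absurd rfl hmn
    · exact (raySpace_isOrtho_orthogonal_span w (r n)).symm
    · exact raySpace_isOrtho_orthogonal_span w (r m)
    · exact raySpace_isOrtho hw (hr.2 fun h => hmn (congrArg some h))
  · change (⨆ o : Option (Fin 3), (o.elim _ _ : Submodule ℂ E))ᗮ = ⊥
    rw [iSup_option_elim, ← inf_orthogonal, eq_bot_iff]
    calc (span ℂ (Set.range w))ᗮᗮ ⊓ (⨆ m, raySpace w (r m))ᗮ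
        ≤ (span ℂ (Set.range w))ᗮᗮ ⊓ (span ℂ (Set.range w))ᗮ :=
          inf_le_inf_left _ (orthogonal_le (span_le_iSup_raySpace hw hr))
      _ = ⊥ := (inf_comm _ _).trans (inf_orthogonal_eq_bot _)

theorem raySpace_single (w : Unit × Fin 3 → E) (m : Fin 3) :
    raySpace w (Pi.single m 1) = span ℂ {w ((), m)} := by
  have : intComb (fun k => w ((), k)) (Pi.single m 1) = w ((), m) := by
    simp [intComb, Pi.single_apply]
  rw [raySpace, Set.range_unique]
  change (span ℂ {intComb (fun k => w ((), k)) (Pi.single m 1)}).topologicalClosure = _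
  rw [this]
  exact (closed_of_finiteDimensional _).submodule_topologicalClosure_eq

end Frame

section HilbertBasis

variable {E : Type*} [NormedAddCommGroup E] [InnerProductSpace ℂ E] [CompleteSpace E]
  {v : ∀ W : Set (ClosedSubspace E), IsBoolSub W → ClosedSubspace E → Bool}

theorem isOrthDecomp_span_singleton {ι : Type*} (b : HilbertBasis ι ℂ E) :
    IsOrthDecomp fun i => span ℂ {b i} := by
  refine ⟨fun i => closed_of_finiteDimensional _, fun i j hij => ?_, ?_⟩
  · refine isOrtho_span.2 ?_
    rintro _ rfl _ rfl
    exact b.orthonormal.2 hij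
  · rw [← span_range_eq_iSup]
    exact topologicalClosure_eq_top_iff.1 b.dense_span

theorem IsGlobalValuation.isKSColouring (hv : IsGlobalValuation v) {κ : Type*}
    {w : κ × Fin 3 → E} (hw : Orthonormal ℂ w)
    (hR : globalValue v ⟨(span ℂ (Set.range w))ᗮ, isClosed_orthogonal _⟩ = false) :
    IsKSColouring fun r => globalValue v ⟨raySpace w r, isClosed_topologicalClosure _⟩ := by
  intro r hr
  obtain ⟨o, ho, huniq⟩ := hv.existsUnique_globalValue (isOrthDecomp_triadDecomp hw hr)
  cases o with
  | none => exact (Bool.false_ne_true (hR.symm.trans ho)).elim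
  | some m => exact ⟨m, ho, fun n hn => Option.some_injective _ (huniq (some n) hn)⟩

theorem IsGlobalValuation.globalValue_orthogonal_span (hv : IsGlobalValuation v) {κ : Type*}
    {w : κ × Fin 3 → E} (hw : Orthonormal ℂ w) :
    globalValue v ⟨(span ℂ (Set.range w))ᗮ, isClosed_orthogonal _⟩ = true :=
  Bool.of_not_eq_false fun hR => not_isKSColouring _ (hv.isKSColouring hw hR)

theorem not_isGlobalValuation_of_infinite {ι : Type*} [Infinite ι] (b : HilbertBasis ι ℂ E) :
    ¬ IsGlobalValuation v := by
  intro hv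
  have hcard : Cardinal.mk (ι × Fin 3) = Cardinal.mk ι := by
    rw [Cardinal.mk_prod, Cardinal.lift_uzero, Cardinal.mk_fin, Cardinal.lift_natCast]
    exact Cardinal.mul_eq_left (Cardinal.aleph0_le_mk ι)
      (Cardinal.natCast_lt_aleph0.le.trans (Cardinal.aleph0_le_mk ι)) (by norm_num)
  obtain ⟨e⟩ := Cardinal.eq.1 hcard
  have hbot : (⟨(span ℂ (Set.range (b ∘ e)))ᗮ, isClosed_orthogonal _⟩ : ClosedSubspace E) =
      ClosedSubspace.bot := by
    refine Subtype.ext ?_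
    rw [e.surjective.range_comp]
    exact topologicalClosure_eq_top_iff.1 b.dense_span
  have := hv.globalValue_orthogonal_span (b.orthonormal.comp e e.injective)
  rw [hbot, hv.globalValue_bot] at this
  exact Bool.false_ne_true this

theorem not_isGlobalValuation_of_finite {ι : Type*} [Finite ι] (b : HilbertBasis ι ℂ E)
    (hdim : 3 ≤ Module.rank ℂ E) : ¬ IsGlobalValuation v := by
  classical
  intro hv
  have := Fintype.ofFinite ι
  obtain ⟨i₀, hi₀, -⟩ := hv.existsUnique_globalValue (isOrthDecomp_span_singleton b)
  have hcard : Fintype.card (Fin 3) ≤ Fintype.card ι := by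
    rw [rank_eq_card_basis b.toOrthonormalBasis.toBasis] at hdim
    simpa using hdim
  obtain ⟨f⟩ := Function.Embedding.nonempty_of_card_le hcard
  let g := f.trans (Equiv.swap (f 0) i₀).toEmbedding
  let w : Unit × Fin 3 → E := fun p => b (g p.2)
  have hw : Orthonormal ℂ w :=
    b.orthonormal.comp _ fun p q h => Prod.ext (Subsingleton.elim _ _) (g.injective h)
  have hw₀ : raySpace w (Pi.single 0 1) = span ℂ {b i₀} := by
    rw [raySpace_single]
    simp [w, g]
  obtain ⟨o, -, huniq⟩ :=
    hv.existsUnique_globalValue (isOrthDecomp_triadDecomp hw isOrthTriad_single)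
  have h₀ := huniq (some 0) (by simp only [triadDecomp, Option.elim_some, hw₀]; exact hi₀)
  exact Option.some_ne_none 0 (h₀.trans (huniq none (hv.globalValue_orthogonal_span hw)).symm)

end HilbertBasis

end KochenSpecker

/-- Kochen–Specker in algebraic terms: if `dim H ≥ 3` there is no global
valuation on the lattice of closed subspaces of `H`, i.e. no family of Boolean
homomorphisms, one for each Boolean subalgebra, agreeing on overlaps. -/
theorem stmt_13 (hdim : 3 ≤ Module.rank ℂ H) :
    ¬ ∃ v : ∀ W : Set (ClosedSubspace H), IsBoolSub W → ClosedSubspace H → Bool,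
      (∀ (W : Set (ClosedSubspace H)) (hW : IsBoolSub W), IsHomOn W (v W hW)) ∧
      (∀ (W₁ W₂ : Set (ClosedSubspace H)) (h₁ : IsBoolSub W₁)
        (h₂ : IsBoolSub W₂) (x : ClosedSubspace H),
        x ∈ W₁ → x ∈ W₂ → v W₁ h₁ x = v W₂ h₂ x) := by
  rintro ⟨v, hhom, hagree⟩
  obtain ⟨ι, b, -⟩ := exists_hilbertBasis ℂ H
  rcases finite_or_infinite ι with hι | hι
  · exact KochenSpecker.not_isGlobalValuation_of_finite b hdim ⟨hhom, hagree⟩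
  · exact KochenSpecker.not_isGlobalValuation_of_infinite b ⟨hhom, hagree⟩
end
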